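/- arXiv:2407.17121 — 3 statements merged into one kernel-verified Lean document; each statement's English description precedes it below -/
import Mathlib

section
/- For all positive integers x and n, x^n = x + \sum_{s=1}^{m} \frac{2\,n!}{(2s)!\,(n-2s)!} \sum_{k=1}^{x-1} \sum_{j=1}^{k} j^{\,n-2s}, where m = n/2 if n is even and m = (n-1)/2 if n is odd (i.e., m = \lfloor n/2 \rfloor), and each coefficient \frac{2\,n!}{(2s)!\,(n-2s)!} is (exactly) twice the binomial coefficient \binom{n}{2s}. -/
open Finset

private lemma aux_even_sum (n : ℕ) (y : ℚ) :
    (y+1)^n + (y-1)^n = ∑ s ∈ Finset.range (n/2 + 1), 2 * (n.choose (2*s) : ℚ) * y^(n - 2*s) := by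
  have h1 : (y+1)^n = ∑ k ∈ Finset.range (n+1), y^(n-k) * (n.choose k : ℚ) := by
    rw [add_comm, add_pow]; simp
  have h2 : (y-1)^n = ∑ k ∈ Finset.range (n+1), (-1)^k * y^(n-k) * (n.choose k : ℚ) := by
    have h : y - 1 = (-1) + y := by ring
    rw [h, add_pow]
  rw [h1, h2, ← Finset.sum_add_distrib]
  have hfil : ∑ k ∈ Finset.range (n+1), (y^(n-k) * (n.choose k : ℚ) + (-1)^k * y^(n-k) * (n.choose k : ℚ))
      = ∑ k ∈ (Finset.range (n+1)).filter (fun k => Even k), (y^(n-k) * (n.choose k : ℚ) + (-1)^k * y^(n-k) * (n.choose k : ℚ)) := by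
    refine (Finset.sum_filter_of_ne ?_).symm
    intro k hk hne
    by_contra hodd
    have hm : (-1:ℚ)^k = -1 := Odd.neg_one_pow (Nat.not_even_iff_odd.mp hodd)
    rw [hm] at hne
    exact hne (by ring)
  rw [hfil]
  refine Finset.sum_nbij' (fun k => k / 2) (fun s => 2 * s) ?_ ?_ ?_ ?_ ?_
  · intro k hk
    simp only [Finset.mem_filter, Finset.mem_range] at hk
    simp only [Finset.mem_range]
    omega
  · intro s hs
    simp only [Finset.mem_range] at hs
    simp only [Finset.mem_filter, Finset.mem_range]
    constructor
    · omega
    · exact even_two_mul s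
  · intro k hk
    simp only [Finset.mem_filter, Finset.mem_range] at hk
    obtain ⟨_, c, hc⟩ := hk
    show 2 * (k / 2) = k
    omega
  · intro s hs
    show 2 * s / 2 = s
    omega
  · intro k hk
    simp only [Finset.mem_filter, Finset.mem_range] at hk
    obtain ⟨_, hkeven⟩ := hk
    have h1 : (-1:ℚ)^k = 1 := hkeven.neg_one_pow
    rw [h1]
    obtain ⟨c, hc⟩ := hkeven
    have : 2 * (k/2) = k := by omega
    rw [this]; ring

private lemma aux_key (n : ℕ) (y : ℚ) :
    ∑ s ∈ Finset.Icc 1 (n/2), 2 * (n.choose (2*s) : ℚ) * y^(n - 2*s)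
      = (y+1)^n + (y-1)^n - 2*y^n := by
  have hr : Finset.range (n/2 + 1) = insert 0 (Finset.Icc 1 (n/2)) := by
    ext a
    simp only [Finset.mem_range, Finset.mem_insert, Finset.mem_Icc]
    omega
  have := aux_even_sum n y
  rw [hr, Finset.sum_insert (by simp)] at this
  simp only [Nat.mul_zero, Nat.choose_zero_right, Nat.cast_one, Nat.sub_zero] at this
  linarith [this]

theorem pow_eq_add_nested_sum_mod_two (x n : ℕ) (hx : 0 < x) (hn : 0 < n) :
    (x : ℚ) ^ n =
      (x : ℚ) + ∑ s ∈ Finset.Icc 1 (n / 2),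
        (2 * (Nat.factorial n : ℚ) /
            ((Nat.factorial (2 * s) : ℚ) * (Nat.factorial (n - 2 * s) : ℚ))) *
          ∑ k ∈ Finset.Icc 1 (x - 1), ∑ j ∈ Finset.Icc 1 k, (j : ℚ) ^ (n - 2 * s) := by
  have step1 : ∑ s ∈ Finset.Icc 1 (n / 2),
        (2 * (Nat.factorial n : ℚ) /
            ((Nat.factorial (2 * s) : ℚ) * (Nat.factorial (n - 2 * s) : ℚ))) *
          ∑ k ∈ Finset.Icc 1 (x - 1), ∑ j ∈ Finset.Icc 1 k, (j : ℚ) ^ (n - 2 * s)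
      = ∑ s ∈ Finset.Icc 1 (n / 2), ∑ k ∈ Finset.Icc 1 (x - 1), ∑ j ∈ Finset.Icc 1 k,
          2 * (n.choose (2*s) : ℚ) * (j : ℚ) ^ (n - 2 * s) := by
    refine Finset.sum_congr rfl fun s hs => ?_
    simp only [Finset.mem_Icc] at hs
    have h2s : 2 * s ≤ n := by omega
    have hc : (2 * (Nat.factorial n : ℚ) /
        ((Nat.factorial (2 * s) : ℚ) * (Nat.factorial (n - 2 * s) : ℚ)))
        = 2 * (n.choose (2*s) : ℚ) := by
      rw [Nat.cast_choose ℚ h2s]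
      ring
    rw [hc, Finset.mul_sum]
    exact Finset.sum_congr rfl fun k _ => Finset.mul_sum _ _ _
  have tel1 : ∀ k : ℕ, ∑ j ∈ Finset.Icc 1 k,
      (((j:ℚ)+1)^n + ((j:ℚ)-1)^n - 2*(j:ℚ)^n) = ((k:ℚ)+1)^n - (k:ℚ)^n - 1 := by
    intro k
    induction k with
    | zero => simp [zero_pow hn.ne']
    | succ k ih =>
      rw [Finset.sum_Icc_succ_top (by omega), ih]
      push_cast
      ring
  have tel2 : ∀ m : ℕ, ∑ k ∈ Finset.Icc 1 m,
      (((k:ℚ)+1)^n - (k:ℚ)^n - 1) = ((m:ℚ)+1)^n - 1 - (m:ℚ) := by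
    intro m
    induction m with
    | zero => simp
    | succ m ih =>
      rw [Finset.sum_Icc_succ_top (by omega), ih]
      push_cast
      ring
  rw [step1, Finset.sum_comm]
  have step2 : ∀ k ∈ Finset.Icc 1 (x-1),
      ∑ s ∈ Finset.Icc 1 (n / 2), ∑ j ∈ Finset.Icc 1 k,
          2 * (n.choose (2*s) : ℚ) * (j : ℚ) ^ (n - 2 * s)
      = ((k:ℚ)+1)^n - (k:ℚ)^n - 1 := by
    intro k _
    rw [Finset.sum_comm]
    rw [← tel1 k]
    exact Finset.sum_congr rfl fun j _ => aux_key n (j:ℚ)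
  rw [Finset.sum_congr rfl step2, tel2 (x-1)]
  have hcast : ((x - 1 : ℕ) : ℚ) = (x : ℚ) - 1 := by
    have : (1:ℕ) ≤ x := hx
    push_cast [this]
    ring
  rw [hcast]
  ring
end

section
/- For all positive integers x and n, x^n = x + \sum_{r=2}^{n} \frac{n!}{(n-r)!} \Big( \sum_{i=1}^{r-1} \frac{(-1)^{r-i+1}}{i!\,(r-i)!} \Big) \cdot \sum_{k=1}^{x-1} \sum_{j=1}^{k} j^{\,n-r}, as an identity in the rational numbers. -/
open Finset

lemma isum_eq (r : ℕ) (hr : 2 ≤ r) :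
    ∑ i ∈ Finset.Icc 1 (r - 1),
      ((-1 : ℚ) ^ (r - i + 1)) / ((Nat.factorial i : ℚ) * (Nat.factorial (r - i) : ℚ))
      = ((-1 : ℚ) ^ r + 1) / (Nat.factorial r : ℚ) := by
  have halt : ∑ i ∈ Finset.range (r+1), (-1:ℚ)^i * (Nat.choose r i : ℚ) = 0 := by
    have h := Int.alternating_sum_range_choose (n := r)
    rw [if_neg (by omega)] at h
    have h2 : ((∑ i ∈ Finset.range (r+1), (-1)^i * (r.choose i) : ℤ) : ℚ) = 0 := by
      rw [h]; norm_num
    push_cast at h2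
    exact h2
  have hsplit : Finset.range (r+1) = insert 0 (insert r (Finset.Icc 1 (r-1))) := by
    ext m; simp [Finset.mem_range, Finset.mem_Icc]; omega
  have key : ∑ i ∈ Finset.Icc 1 (r-1), (-1:ℚ)^i * (Nat.choose r i : ℚ) = -(1 + (-1)^r) := by
    rw [hsplit, Finset.sum_insert (by simp [Finset.mem_Icc]; omega),
      Finset.sum_insert (by simp [Finset.mem_Icc]; omega)] at halt
    simp only [pow_zero, Nat.choose_zero_right, Nat.choose_self, Nat.cast_one, one_mul,
      mul_one] at halt
    linarith
  have step : ∀ i ∈ Finset.Icc 1 (r-1),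
      ((-1 : ℚ) ^ (r - i + 1)) / ((Nat.factorial i : ℚ) * (Nat.factorial (r - i) : ℚ))
      = (-1:ℚ)^(r+1) * ((-1:ℚ)^i * (Nat.choose r i : ℚ)) / (Nat.factorial r : ℚ) := by
    intro i hi
    rw [Finset.mem_Icc] at hi
    have hle : i ≤ r := by omega
    have hsign : (-1:ℚ)^(r-i+1) = (-1)^(r+1) * (-1)^i := by
      have hh : r - i + 1 + i = r + 1 := by omega
      have h0 : (-1:ℚ)^(r+1) = (-1)^(r-i+1) * (-1)^i := by rw [← pow_add, hh]
      rw [h0, mul_assoc, ← pow_add]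
      simp [← two_mul, pow_mul]
    rw [hsign, Nat.cast_choose ℚ hle]
    have h1 : (Nat.factorial i : ℚ) ≠ 0 := Nat.cast_ne_zero.mpr i.factorial_ne_zero
    have h2 : (Nat.factorial (r-i) : ℚ) ≠ 0 := Nat.cast_ne_zero.mpr (r-i).factorial_ne_zero
    have h3 : (Nat.factorial r : ℚ) ≠ 0 := Nat.cast_ne_zero.mpr r.factorial_ne_zero
    field_simp
  rw [Finset.sum_congr rfl step]
  rw [← Finset.sum_div, ← Finset.mul_sum, key]
  have hsq : ((-1:ℚ)^r)*((-1)^r) = 1 := by rw [← pow_add]; simp [← two_mul, pow_mul]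
  rw [pow_succ]
  rw [div_eq_div_iff (by positivity) (by positivity)]
  ring_nf
  linear_combination (Nat.factorial r : ℚ) * hsq

lemma rsum_eq (n : ℕ) (hn : 0 < n) (q : ℚ) :
    ∑ r ∈ Finset.Icc 2 n, (Nat.choose n r : ℚ) * ((-1)^r + 1) * q^(n-r)
      = (q+1)^n + (q-1)^n - 2*q^n := by
  have h1 : (q+1)^n = ∑ k ∈ Finset.range (n+1), q^k * (Nat.choose n k : ℚ) := by
    rw [add_pow]; simp
  have h2 : (q-1)^n = ∑ k ∈ Finset.range (n+1), q^k * (-1:ℚ)^(n-k) * (Nat.choose n k : ℚ) := by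
    rw [sub_eq_add_neg, add_pow]
  have h3 : (q+1)^n + (q-1)^n
      = ∑ k ∈ Finset.range (n+1), (Nat.choose n k : ℚ) * ((-1)^(n-k) + 1) * q^k := by
    rw [h1, h2, ← Finset.sum_add_distrib]
    exact Finset.sum_congr rfl fun k _ => by ring
  have h4 : (q+1)^n + (q-1)^n
      = ∑ r ∈ Finset.range (n+1), (Nat.choose n r : ℚ) * ((-1)^r + 1) * q^(n-r) := by
    rw [h3, ← Finset.sum_range_reflect]
    refine Finset.sum_congr rfl fun r hr => ?_
    rw [Finset.mem_range] at hr
    have h5 : n + 1 - 1 - r = n - r := by omega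
    have h6 : n - (n - r) = r := by omega
    rw [h5, h6, Nat.choose_symm (by omega)]
  have hsplit : Finset.range (n+1) = insert 0 (insert 1 (Finset.Icc 2 n)) := by
    ext m; simp [Finset.mem_range, Finset.mem_Icc]; omega
  rw [h4, hsplit, Finset.sum_insert (by simp), Finset.sum_insert (by simp)]
  simp only [Nat.choose_zero_right, Nat.choose_one_right, pow_zero, Nat.sub_zero, pow_one,
    Nat.cast_one]
  ring

lemma telescope (n x : ℕ) (hn : 0 < n) :
    ∑ j ∈ Finset.Icc 1 x, (((j:ℚ)+1)^n + ((j:ℚ)-1)^n - 2*(j:ℚ)^n)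
      = ((x:ℚ)+1)^n - (x:ℚ)^n - 1 := by
  induction x with
  | zero => simp [zero_pow hn.ne']
  | succ m ih =>
    rw [Finset.sum_Icc_succ_top (by omega), ih]
    push_cast; ring

lemma main_aux (n : ℕ) (hn : 0 < n) (x : ℕ) (hx : 1 ≤ x) :
    (x:ℚ)^n = x + ∑ r ∈ Finset.Icc 2 n, (Nat.choose n r : ℚ) * ((-1)^r + 1) *
      ∑ k ∈ Finset.Icc 1 (x-1), ∑ j ∈ Finset.Icc 1 k, (j:ℚ)^(n-r) := by
  induction x, hx using Nat.le_induction with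
  | base => simp
  | succ m hm ih =>
    have e1 : m + 1 - 1 = m := rfl
    have hstep : ∀ r : ℕ, ∑ k ∈ Finset.Icc 1 m, (∑ j ∈ Finset.Icc 1 k, (j:ℚ)^(n-r))
        = (∑ k ∈ Finset.Icc 1 (m-1), ∑ j ∈ Finset.Icc 1 k, (j:ℚ)^(n-r))
          + ∑ j ∈ Finset.Icc 1 m, (j:ℚ)^(n-r) := by
      intro r
      conv_lhs => rw [← Nat.sub_add_cancel hm]
      rw [Finset.sum_Icc_succ_top (by omega), Nat.sub_add_cancel hm]
    rw [e1]
    have hsum : ∑ r ∈ Finset.Icc 2 n, (Nat.choose n r : ℚ) * ((-1)^r + 1) *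
        ∑ k ∈ Finset.Icc 1 m, ∑ j ∈ Finset.Icc 1 k, (j:ℚ)^(n-r)
        = (∑ r ∈ Finset.Icc 2 n, (Nat.choose n r : ℚ) * ((-1)^r + 1) *
            ∑ k ∈ Finset.Icc 1 (m-1), ∑ j ∈ Finset.Icc 1 k, (j:ℚ)^(n-r))
          + ∑ r ∈ Finset.Icc 2 n, (Nat.choose n r : ℚ) * ((-1)^r + 1) *
            ∑ j ∈ Finset.Icc 1 m, (j:ℚ)^(n-r) := by
      rw [← Finset.sum_add_distrib]
      exact Finset.sum_congr rfl fun r _ => by rw [hstep r]; ring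
    rw [hsum]
    have hswap : ∑ r ∈ Finset.Icc 2 n, (Nat.choose n r : ℚ) * ((-1)^r + 1) *
        ∑ j ∈ Finset.Icc 1 m, (j:ℚ)^(n-r)
        = ∑ j ∈ Finset.Icc 1 m, (((j:ℚ)+1)^n + ((j:ℚ)-1)^n - 2*(j:ℚ)^n) := by
      simp_rw [Finset.mul_sum]
      rw [Finset.sum_comm]
      refine Finset.sum_congr rfl fun j _ => ?_
      simpa using rsum_eq n hn (j : ℚ)
    rw [hswap, telescope n m hn]
    push_cast
    linarith [ih]

theorem pow_eq_add_sum_over_r (x n : ℕ) (hx : 0 < x) (hn : 0 < n) :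
    (x : ℚ) ^ n =
      (x : ℚ) + ∑ r ∈ Finset.Icc 2 n,
        ((Nat.factorial n : ℚ) / (Nat.factorial (n - r) : ℚ)) *
          (∑ i ∈ Finset.Icc 1 (r - 1),
            ((-1 : ℚ) ^ (r - i + 1)) /
              ((Nat.factorial i : ℚ) * (Nat.factorial (r - i) : ℚ))) *
          ∑ k ∈ Finset.Icc 1 (x - 1), ∑ j ∈ Finset.Icc 1 k, (j : ℚ) ^ (n - r) := by
  rw [main_aux n hn x hx]
  congr 1
  refine Finset.sum_congr rfl fun r hr => ?_
  rw [Finset.mem_Icc] at hr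
  rw [isum_eq r hr.1, Nat.cast_choose ℚ hr.2]
  congr 1
  rw [div_mul_div_comm, div_mul_eq_mul_div,
    mul_comm ((Nat.factorial (n-r) : ℚ)) ((Nat.factorial r : ℚ))]
end

section
/- For every positive integer s, \frac{-1}{(2s)!\,2!} + \frac{1}{(2s+1)!\,1!} + \frac{2\big((2s+1)(2s+2)-1\big)}{(2s+2)!} = \sum_{i=1}^{2s-1} \frac{(-1)^{1+i}\big((2s-i)^2 + 3(2s-i) + 1\big)}{i!\,(2s+2-i)!}. -/
/-!
Multiplied by `(2s+2)!`, the right-hand side is the alternating binomial sum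
`∑ (-1)^(i+1) C(2s+2, i) p(2s - i)` with `p x = x^2 + 3x + 1`, restricted to `1 ≤ i ≤ 2s-1`.
Over the full range `0 ≤ i ≤ 2s+2` this is a `(2s+2)`-nd forward difference of a quadratic,
hence zero; so the restricted sum is minus the four boundary terms `i = 0, 2s, 2s+1, 2s+2`,
and these add up to the left-hand side.
-/

open Finset Polynomial Nat

theorem Polynomial.sum_range_neg_one_pow_mul_choose_mul_eval_eq_zero {R : Type*} [CommRing R]
    (P : R[X]) {m : ℕ} (hP : P.natDegree < m) :
    ∑ k ∈ range (m + 1), (-1) ^ k * (m.choose k : R) * P.eval (k : R) = 0 := by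
  have h := congrFun (fwdDiff_iter_eq_zero_of_degree_lt hP) 0
  rw [fwdDiff_iter_eq_sum_shift, Pi.zero_apply] at h
  calc _ = (-1) ^ m * ∑ k ∈ range (m + 1),
        ((-1 : ℤ) ^ (m - k) * m.choose k) • P.eval (0 + k • 1) := by
        rw [mul_sum]
        refine sum_congr rfl fun k hk => ?_
        have hsign : (-1 : R) ^ k = (-1) ^ m * (-1) ^ (m - k) := by
          rw [← pow_add, ← (by grind : k + 2 * (m - k) = m + (m - k)), pow_add, pow_mul]
          simp
        rw [hsign, zsmul_eq_mul]
        push_cast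
        simp only [zero_add, nsmul_eq_mul, mul_one]
        ring
    _ = 0 := by rw [h, mul_zero]

theorem Polynomial.sum_range_neg_one_pow_mul_eval_div_factorial_mul_factorial_eq_zero
    {K : Type*} [Field K] [CharZero K] (P : K[X]) {m : ℕ} (hP : P.natDegree < m) :
    ∑ k ∈ range (m + 1), (-1) ^ k * P.eval (k : K) / (k ! * (m - k)! : K) = 0 := by
  have hm : (m ! : K) ≠ 0 := Nat.cast_ne_zero.mpr m.factorial_ne_zero
  calc _ = (∑ k ∈ range (m + 1), (-1) ^ k * (m.choose k : K) * P.eval (k : K)) / m ! := by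
        rw [sum_div]
        refine sum_congr rfl fun k hk => ?_
        rw [cast_choose K (Nat.lt_succ_iff.mp (mem_range.mp hk))]
        field_simp
    _ = 0 := by rw [P.sum_range_neg_one_pow_mul_choose_mul_eval_eq_zero hP, zero_div]

theorem three_term_eq_alternating_sum (s : ℕ) (hs : 0 < s) :
    (-1) / ((Nat.factorial (2 * s) : ℚ) * (Nat.factorial 2 : ℚ)) +
        1 / ((Nat.factorial (2 * s + 1) : ℚ) * (Nat.factorial 1 : ℚ)) +
        2 * (((2 * s + 1 : ℚ)) * ((2 * s + 2 : ℚ)) - 1) /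
          (Nat.factorial (2 * s + 2) : ℚ) =
      ∑ i ∈ Finset.Icc 1 (2 * s - 1),
        ((-1 : ℚ) ^ (1 + i)) * (((2 * s - i : ℕ) : ℚ) ^ 2 + 3 * ((2 * s - i : ℕ) : ℚ) + 1) /
          ((Nat.factorial i : ℚ) * (Nat.factorial (2 * s + 2 - i) : ℚ)) := by
  have hn : 0 < 2 * s := by omega
  set P : ℚ[X] := (C (2 * s : ℚ) - X) ^ 2 + 3 * (C (2 * s : ℚ) - X) + 1 with hP_def
  have hP : P.natDegree < 2 * s + 2 := by
    have : P.natDegree ≤ 2 := by rw [hP_def]; compute_degree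
    omega
  have hPeval (x : ℚ) : P.eval x = (2 * s - x) ^ 2 + 3 * (2 * s - x) + 1 := by simp [hP_def]
  set g : ℕ → ℚ := fun k => (-1) ^ k * P.eval (k : ℚ) / (k ! * (2 * s + 2 - k)! : ℚ) with hg_def
  have hvanish : ∑ k ∈ range (2 * s + 2 + 1), g k = 0 :=
    P.sum_range_neg_one_pow_mul_eval_div_factorial_mul_factorial_eq_zero hP
  rw [sum_range_succ, sum_range_succ, sum_range_succ, sum_range_eq_add_Ico _ hn,
    ← Icc_sub_one_right_eq_Ico_of_not_isMin (by simpa using hn.ne') 1] at hvanish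
  calc _ = g 0 + g (2 * s) + g (2 * s + 1) + g (2 * s + 2) := by
        simp only [hg_def, hPeval, (even_two_mul s).neg_one_pow, pow_succ, factorial_succ,
          add_tsub_cancel_left, reduceSubDiff, tsub_self, tsub_zero]
        push_cast
        field_simp
        ring
    _ = -∑ k ∈ Icc 1 (2 * s - 1), g k := by linear_combination hvanish
    _ = _ := by
        rw [← sum_neg_distrib]
        refine sum_congr rfl fun i hi_mem => ?_
        have hi : i ≤ 2 * s := by grind
        simp only [hg_def, hPeval, pow_add, pow_one, neg_mul, one_mul, cast_sub hi]
        push_cast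
        ring
end
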